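/- Let ℓ, ℓ', m, n be nonnegative integers with m ≤ ℓ and n ≤ ℓ'. Then ((ℓ+ℓ'+1)/(ℓ+1)) · m(m+1)/2 + ((ℓ+ℓ'+1)/(ℓ'+1)) · n(n+1)/2 ≥ (m+n)(m+n+1)/2; equivalently, m(m+1)ℓ'(ℓ'+1) + n(n+1)ℓ(ℓ+1) ≥ 2mn(ℓ+1)(ℓ'+1). -/
import Mathlib

/-- For nonnegative integers ℓ, ℓ', m, n with m ≤ ℓ and n ≤ ℓ',
((ℓ+ℓ'+1)/(ℓ+1))·m(m+1)/2 + ((ℓ+ℓ'+1)/(ℓ'+1))·n(n+1)/2 ≥ (m+n)(m+n+1)/2. -/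
theorem stmt_15 (l l' m n : ℕ) (hm : m ≤ l) (hn : n ≤ l') :
    ((m : ℝ) + n) * ((m : ℝ) + n + 1) / 2 ≤
      (((l : ℝ) + l' + 1) / ((l : ℝ) + 1)) * ((m : ℝ) * ((m : ℝ) + 1) / 2) +
        (((l : ℝ) + l' + 1) / ((l' : ℝ) + 1)) * ((n : ℝ) * ((n : ℝ) + 1) / 2) := by
  have hm' : (m : ℝ) ≤ l := by exact_mod_cast hm
  have hn' : (n : ℝ) ≤ l' := by exact_mod_cast hn
  have hm0 : (0 : ℝ) ≤ m := Nat.cast_nonneg m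
  have hn0 : (0 : ℝ) ≤ n := Nat.cast_nonneg n
  have hl0 : (0 : ℝ) ≤ l := Nat.cast_nonneg l
  have hl0' : (0 : ℝ) ≤ l' := Nat.cast_nonneg l'
  have hl : (0 : ℝ) < (l : ℝ) + 1 := by positivity
  have hl' : (0 : ℝ) < (l' : ℝ) + 1 := by positivity
  set a : ℝ := m * (m + 1) * (l' * (l' + 1)) with ha
  set b : ℝ := n * (n + 1) * (l * (l + 1)) with hb
  set c : ℝ := m * n * ((l + 1) * (l' + 1)) with hc
  have ha0 : 0 ≤ a := by positivity
  have hb0 : 0 ≤ b := by positivity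
  have hc0 : 0 ≤ c := by positivity
  -- (m+1)l ≥ m(l+1) and (n+1)l' ≥ n(l'+1)
  have h1 : (m : ℝ) * ((l : ℝ) + 1) ≤ ((m : ℝ) + 1) * l := by nlinarith
  have h2 : (n : ℝ) * ((l' : ℝ) + 1) ≤ ((n : ℝ) + 1) * l' := by nlinarith
  have hab : c ^ 2 ≤ a * b := by
    have := mul_le_mul h1 h2 (by positivity) (by positivity)
    have hmn : (0 : ℝ) ≤ m * n * ((l+1) * (l'+1)) := by positivity
    nlinarith [mul_le_mul_of_nonneg_left this hmn]
  have key : 2 * c ≤ a + b := by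
    nlinarith [sq_nonneg (a - b), sq_nonneg (a + b), hab, hc0, ha0, hb0]
  have goal2 : ((m : ℝ) + n) * ((m : ℝ) + n + 1) * (((l:ℝ)+1) * ((l':ℝ)+1)) ≤
      ((l : ℝ) + l' + 1) * (m * (m + 1)) * ((l':ℝ)+1) +
      ((l : ℝ) + l' + 1) * (n * (n + 1)) * ((l:ℝ)+1) := by
    have hid : ((l : ℝ) + l' + 1) * (m * (m + 1)) * ((l':ℝ)+1) +
        ((l : ℝ) + l' + 1) * (n * (n + 1)) * ((l:ℝ)+1) -
        ((m : ℝ) + n) * ((m : ℝ) + n + 1) * (((l:ℝ)+1) * ((l':ℝ)+1)) = a + b - 2 * c := by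
      rw [ha, hb, hc]; ring
    linarith
  rw [div_mul_eq_mul_div, div_mul_eq_mul_div, div_add_div _ _ (ne_of_gt hl) (ne_of_gt hl'),
    div_le_div_iff₀ two_pos (by positivity)]
  ring_nf
  ring_nf at goal2
  linarith [goal2]
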